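/- If Φ = {φ_i}_{i=1}^N spans ℂ^M, x, y ∈ ℂ^M, all measurements ⟨x,φ_i⟩ are nonzero, |⟨x,φ_i⟩| = |⟨y,φ_i⟩| for all i, and all relative phases agree (i.e. conj(⟨x,φ_i⟩)⟨x,φ_j⟩ / |conj(⟨x,φ_i⟩)⟨x,φ_j⟩| = conj(⟨y,φ_i⟩)⟨y,φ_j⟩ / |conj(⟨y,φ_i⟩)⟨y,φ_j⟩| for all pairs i ≠ j), then y = e^{iθ} x for some θ ∈ ℝ. -/

import Mathlib

/-!
The relative phases together with the magnitudes determine every product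
`conj ⟨x, φ_i⟩ * ⟨x, φ_j⟩`, i.e. the rank-one matrix `(conj a_i * a_j)_{ij}` of the measurement
vector `a`. Such a matrix determines `a` up to a unimodular factor `u` (divide row `i` by
`conj a_i` for any `a_i ≠ 0`), and since `Φ` spans, the measurements `⟨y, φ_i⟩ = u ⟨x, φ_i⟩`
force `y = u x`.
-/

open ComplexConjugate

theorem ext_inner_left_of_span_eq_top {𝕜 E ι : Type*} [RCLike 𝕜] [NormedAddCommGroup E]
    [InnerProductSpace 𝕜 E] {φ : ι → E} (hspan : Submodule.span 𝕜 (Set.range φ) = ⊤) {x y : E}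
    (h : ∀ i, inner 𝕜 (φ i) x = inner 𝕜 (φ i) y) : x = y :=
  ext_inner_left 𝕜 <| LinearMap.congr_fun <|
    LinearMap.ext_on_range hspan (f := (innerₛₗ 𝕜).flip x) (g := (innerₛₗ 𝕜).flip y) h

namespace RCLike

variable {𝕜 : Type*} [RCLike 𝕜]

theorem eq_of_norm_eq_of_div_norm_eq {z w : 𝕜} (hnorm : ‖z‖ = ‖w‖)
    (h : z / (‖z‖ : 𝕜) = w / (‖w‖ : 𝕜)) : z = w := by
  rcases eq_or_ne ‖z‖ 0 with hz | hz
  · rw [norm_eq_zero.1 hz, norm_eq_zero.1 (hnorm.symm.trans hz)]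
  · rwa [hnorm, div_left_inj' (ofReal_ne_zero.2 (hnorm ▸ hz : ‖w‖ ≠ 0))] at h

theorem exists_norm_eq_one_eq_mul_of_conj_mul_eq {ι : Type*} {a b : ι → 𝕜}
    (h : ∀ i j, conj (a i) * a j = conj (b i) * b j) : ∃ u : 𝕜, ‖u‖ = 1 ∧ ∀ j, b j = u * a j := by
  have hnorm (i : ι) : ‖a i‖ = ‖b i‖ := by
    have hsq := h i i
    rw [conj_mul, conj_mul] at hsq
    exact (sq_eq_sq₀ (norm_nonneg _) (norm_nonneg _)).1 (by exact_mod_cast hsq)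
  by_cases ha : ∀ i, a i = 0
  · refine ⟨1, norm_one, fun j => ?_⟩
    rw [ha j, mul_zero, ← norm_eq_zero, ← hnorm, ha j, norm_zero]
  obtain ⟨i, hai⟩ := not_forall.1 ha
  have hbi : b i ≠ 0 := by
    rwa [← norm_ne_zero_iff, ← hnorm, norm_ne_zero_iff]
  refine ⟨conj (a i) / conj (b i), ?_, fun j => ?_⟩
  · rw [norm_div, norm_conj, norm_conj, hnorm, div_self (norm_ne_zero_iff.2 hbi)]
  · rw [div_mul_eq_mul_div, h i j, mul_div_cancel_left₀ _ ((map_ne_zero _).2 hbi)]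

end RCLike

theorem magnitudes_and_relative_phases_determine_general (M N : ℕ)
    (φ : Fin N → EuclideanSpace ℂ (Fin M))
    (hspan : Submodule.span ℂ (Set.range φ) = ⊤)
    (x y : EuclideanSpace ℂ (Fin M))
    (hmag : ∀ i, ‖(inner ℂ (φ i) x : ℂ)‖ = ‖(inner ℂ (φ i) y : ℂ)‖)
    (hrel : ∀ i j, i ≠ j →
      (starRingEnd ℂ) (inner ℂ (φ i) x : ℂ) * (inner ℂ (φ j) x : ℂ) /
          (‖(starRingEnd ℂ) (inner ℂ (φ i) x : ℂ) * (inner ℂ (φ j) x : ℂ)‖ : ℂ) =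
        (starRingEnd ℂ) (inner ℂ (φ i) y : ℂ) * (inner ℂ (φ j) y : ℂ) /
          (‖(starRingEnd ℂ) (inner ℂ (φ i) y : ℂ) * (inner ℂ (φ j) y : ℂ)‖ : ℂ)) :
    ∃ θ : ℝ, y = Complex.exp (θ * Complex.I) • x := by
  have hprod (i j : Fin N) : conj (inner ℂ (φ i) x) * inner ℂ (φ j) x
      = conj (inner ℂ (φ i) y) * inner ℂ (φ j) y := by
    rcases eq_or_ne i j with rfl | hij
    · rw [RCLike.conj_mul, RCLike.conj_mul, hmag]
    · refine RCLike.eq_of_norm_eq_of_div_norm_eq ?_ (hrel i j hij)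
      rw [norm_mul, norm_mul, RCLike.norm_conj, RCLike.norm_conj, hmag, hmag]
  obtain ⟨u, hu, hyx⟩ := RCLike.exists_norm_eq_one_eq_mul_of_conj_mul_eq hprod
  obtain ⟨θ, rfl⟩ := (Complex.norm_eq_one_iff u).1 hu
  exact ⟨θ, ext_inner_left_of_span_eq_top hspan fun i => by rw [inner_smul_right, hyx]⟩

/-- If `Φ` spans `ℂ^M`, all measurements of `x` are nonzero, the magnitudes of the
measurements of `x` and `y` agree, and all pairwise relative phases agree, then
`y = e^{iθ} x` for some `θ`. Here the paper's `⟨x, φ⟩` is Mathlib's `inner φ x`. -/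
theorem magnitudes_and_relative_phases_determine (M N : ℕ)
    (φ : Fin N → EuclideanSpace ℂ (Fin M))
    (hspan : Submodule.span ℂ (Set.range φ) = ⊤)
    (x y : EuclideanSpace ℂ (Fin M))
    (hx : ∀ i, (inner ℂ (φ i) x : ℂ) ≠ 0)
    (hmag : ∀ i, ‖(inner ℂ (φ i) x : ℂ)‖ = ‖(inner ℂ (φ i) y : ℂ)‖)
    (hrel : ∀ i j, i ≠ j →
      (starRingEnd ℂ) (inner ℂ (φ i) x : ℂ) * (inner ℂ (φ j) x : ℂ) /
          (‖(starRingEnd ℂ) (inner ℂ (φ i) x : ℂ) * (inner ℂ (φ j) x : ℂ)‖ : ℂ) =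
        (starRingEnd ℂ) (inner ℂ (φ i) y : ℂ) * (inner ℂ (φ j) y : ℂ) /
          (‖(starRingEnd ℂ) (inner ℂ (φ i) y : ℂ) * (inner ℂ (φ j) y : ℂ)‖ : ℂ)) :
    ∃ θ : ℝ, y = Complex.exp (θ * Complex.I) • x :=
  magnitudes_and_relative_phases_determine_general M N φ hspan x y hmag hrel
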